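/- Let ω ∈ ℝ, let V : ℝ → ℝ and H : ℝ → ℂ be continuous, and let u : ℝ → ℂ be a C² solution of u''(s) − V(s)·u(s) = H(s) on ℝ. Assume that there exists c ∈ ℂ with u(s) − c·e^{−iωs} → 0 and u'(s) + iω·c·e^{−iωs} → 0 as s → −∞, that there exists ε > 0 with e^{εs}·(|u(s)| + |u'(s)|) → 0 as s → +∞, and that s ↦ Im(H(s)·conj(u(s))) is absolutely integrable on ℝ. Then ω·|c|² = ∫_{−∞}^{∞} Im(H(s)·conj(u(s))) ds. -/

import Mathlib

/-!
The flux `W = Im (u' · conj u)` satisfies `W' = Im (H · conj u)`: the term `V |u|²` is real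
because `V` is, and `|u'|²` is real. Exponential decay gives `W → 0` at `+∞`, while the
outgoing asymptotics give `W → Im (-iω c · conj c) = -ω |c|²` at `-∞`; the fundamental
theorem of calculus on `ℝ` then yields the identity.
-/

open MeasureTheory Filter Topology ComplexConjugate

theorem HasDerivAt.im_mul_conj_self {f f' : ℝ → ℂ} {f'' : ℂ} {x : ℝ}
    (hf : HasDerivAt f (f' x) x) (hf' : HasDerivAt f' f'' x) :
    HasDerivAt (fun t => (f' t * conj (f t)).im) (f'' * conj (f x)).im x := by
  have hconj : HasDerivAt (fun t => conj (f t)) (conj (f' x)) x := hf.star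
  have him : HasDerivAt (fun t => (f' t * conj (f t)).im)
      (f'' * conj (f x) + f' x * conj (f' x)).im x := by
    simpa [Function.comp_def] using Complex.imCLM.hasFDerivAt.comp_hasDerivAt x (hf'.mul hconj)
  rwa [Complex.add_im, Complex.mul_conj, Complex.ofReal_im, add_zero] at him

theorem Complex.im_ofReal_mul_mul_conj_add (v : ℝ) (z w : ℂ) :
    ((v * z + w) * conj z).im = (w * conj z).im := by
  simp [add_mul, mul_assoc, Complex.mul_conj, ← Complex.ofReal_mul]

theorem tendsto_zero_of_exp_mul_tendsto_zero {g : ℝ → ℝ} {ε : ℝ} (hε : 0 ≤ ε)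
    (hg : ∀ s, 0 ≤ g s) (h : Tendsto (fun s => Real.exp (ε * s) * g s) atTop (𝓝 0)) :
    Tendsto g atTop (𝓝 0) := by
  refine squeeze_zero' (Eventually.of_forall hg) ?_ h
  filter_upwards [eventually_ge_atTop 0] with s hs
  exact le_mul_of_one_le_left (hg s) (Real.one_le_exp (mul_nonneg hε hs))

section ComplexAsymptotics

variable {α : Type*} {l : Filter α} {e f g : α → ℂ} {a b : ℂ}

theorem tendsto_mul_conj_zero_of_norm_add_norm_tendsto_zero
    (h : Tendsto (fun s => ‖f s‖ + ‖g s‖) l (𝓝 0)) :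
    Tendsto (fun s => g s * conj (f s)) l (𝓝 0) := by
  have hf : Tendsto f l (𝓝 0) := tendsto_zero_iff_norm_tendsto_zero.mpr <|
    squeeze_zero (fun _ => norm_nonneg _) (fun _ => le_add_of_nonneg_right (norm_nonneg _)) h
  have hg : Tendsto g l (𝓝 0) := tendsto_zero_iff_norm_tendsto_zero.mpr <|
    squeeze_zero (fun _ => norm_nonneg _) (fun _ => le_add_of_nonneg_left (norm_nonneg _)) h
  simpa using hg.mul hf.star

theorem tendsto_coeff_of_sub_mul_tendsto_zero (he : ∀ s, ‖e s‖ = 1)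
    (hf : Tendsto (fun s => f s - a * e s) l (𝓝 0)) :
    Tendsto (fun s => f s * conj (e s)) l (𝓝 a) := by
  have hbounded : IsBoundedUnder (· ≤ ·) l fun s => ‖conj (e s)‖ :=
    isBoundedUnder_of ⟨1, fun s => by simp [he s]⟩
  have hzero := hf.zero_mul_isBoundedUnder_le hbounded
  refine tendsto_sub_nhds_zero_iff.mp (hzero.congr fun s => ?_)
  have hee : e s * conj (e s) = 1 := by
    rw [Complex.mul_conj', he s]; simp
  linear_combination (-a) * hee

theorem tendsto_mul_conj_of_sub_mul_tendsto_zero (he : ∀ s, ‖e s‖ = 1)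
    (hf : Tendsto (fun s => f s - a * e s) l (𝓝 0))
    (hg : Tendsto (fun s => g s - b * e s) l (𝓝 0)) :
    Tendsto (fun s => g s * conj (f s)) l (𝓝 (b * conj a)) := by
  have hlim := (tendsto_coeff_of_sub_mul_tendsto_zero he hg).mul
    ((tendsto_coeff_of_sub_mul_tendsto_zero he hf).star)
  refine hlim.congr fun s => ?_
  have hee : conj (e s) * e s = 1 := by
    rw [mul_comm, Complex.mul_conj', he s]; simp
  simp only [star_mul', Complex.star_def, Complex.conj_conj]
  linear_combination g s * conj (f s) * hee

end ComplexAsymptotics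

theorem Complex.norm_exp_neg_I_mul_ofReal_mul (ω s : ℝ) :
    ‖Complex.exp (-Complex.I * (ω : ℂ) * (s : ℂ))‖ = 1 := by
  rw [show -Complex.I * (ω : ℂ) * (s : ℂ) = ((-(ω * s) : ℝ) : ℂ) * Complex.I by push_cast; ring]
  exact Complex.norm_exp_ofReal_mul_I _

theorem statement2 (ω : ℝ) (V : ℝ → ℝ) (H u : ℝ → ℂ) (c : ℂ)
    (hu : ContDiff ℝ 2 u)
    (heq : ∀ s : ℝ, deriv (deriv u) s - (V s : ℂ) * u s = H s)
    (hbot : Tendsto (fun s : ℝ => u s - c * Complex.exp (-Complex.I * (ω : ℂ) * (s : ℂ)))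
      atBot (nhds 0))
    (hbot' : Tendsto (fun s : ℝ =>
        deriv u s + Complex.I * (ω : ℂ) * c * Complex.exp (-Complex.I * (ω : ℂ) * (s : ℂ)))
      atBot (nhds 0))
    (htop : ∃ ε : ℝ, 0 < ε ∧
      Tendsto (fun s : ℝ => Real.exp (ε * s) * (‖u s‖ + ‖deriv u s‖)) atTop (nhds 0))
    (hint : Integrable (fun s : ℝ => (H s * (starRingEnd ℂ) (u s)).im)) :
    ω * ‖c‖ ^ 2 = ∫ s : ℝ, (H s * (starRingEnd ℂ) (u s)).im := by
  have hu' : ContDiff ℝ 1 (deriv u) := (contDiff_succ_iff_deriv (n := 1)).mp hu |>.2.2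
  have hW : ∀ s, HasDerivAt (fun t => (deriv u t * conj (u t)).im)
      (H s * conj (u s)).im s := fun s => by
    have h := (hu.differentiable (by norm_num) s).hasDerivAt.im_mul_conj_self
      (hu'.differentiable one_ne_zero s).hasDerivAt
    rwa [eq_add_of_sub_eq' (heq s), Complex.im_ofReal_mul_mul_conj_add] at h
  have hWtop : Tendsto (fun t => (deriv u t * conj (u t)).im) atTop (𝓝 0) := by
    obtain ⟨ε, hε, hdecay⟩ := htop
    have hsum := tendsto_zero_of_exp_mul_tendsto_zero hε.le (fun s => by positivity) hdecay
    have h := (Complex.continuous_im.tendsto _).comp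
      (tendsto_mul_conj_zero_of_norm_add_norm_tendsto_zero hsum)
    rwa [Complex.zero_im] at h
  have hWbot : Tendsto (fun t => (deriv u t * conj (u t)).im) atBot (𝓝 (-(ω * ‖c‖ ^ 2))) := by
    have hbot'' : Tendsto (fun s : ℝ => deriv u s - (-Complex.I * ω * c) *
        Complex.exp (-Complex.I * (ω : ℂ) * (s : ℂ))) atBot (𝓝 0) :=
      hbot'.congr fun s => by ring
    have h := (Complex.continuous_im.tendsto _).comp <| tendsto_mul_conj_of_sub_mul_tendsto_zero
      (Complex.norm_exp_neg_I_mul_ofReal_mul ω) hbot hbot''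
    have hflux : (-Complex.I * ω * c * conj c).im = -(ω * ‖c‖ ^ 2) := by
      rw [mul_assoc, Complex.mul_conj', ← Complex.ofReal_pow]
      simp [Complex.mul_im, -Complex.ofReal_pow]
    rwa [hflux] at h
  rw [integral_of_hasDerivAt_of_tendsto hW hint hWbot hWtop]
  ring
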